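/- Let s, i, j be integers with s >= 2 and 1 <= i < j <= s. Then (2*(s-j)^2 + 2*s*(s-1))/(2*s + 1 - (i + j)) + (j - i + 1) >= s + 2. -/
import Mathlib

theorem stmt_4 (s i j : ℤ) (hs : 2 ≤ s) (hi : 1 ≤ i) (hij : i < j) (hj : j ≤ s) :
    (s : ℚ) + 2 ≤ (2 * ((s : ℚ) - j) ^ 2 + 2 * s * (s - 1)) / (2 * s + 1 - (i + j)) + (j - i + 1) := by
  have hs' : (2:ℚ) ≤ s := by exact_mod_cast hs
  have hi' : (1:ℚ) ≤ i := by exact_mod_cast hi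
  have hij' : (i:ℚ) + 1 ≤ j := by exact_mod_cast (Int.add_one_le_iff.mpr hij)
  have hj' : (j:ℚ) ≤ s := by exact_mod_cast hj
  have hd : (0:ℚ) < 2 * s + 1 - (i + j) := by linarith
  rw [← sub_le_iff_le_add, le_div_iff₀ hd]
  nlinarith [sq_nonneg ((s:ℚ) - j), sq_nonneg ((s:ℚ) - j - i + 1), mul_nonneg (sub_nonneg.2 hj') (sub_nonneg.2 hi')]
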